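/- Let Q(α) = I − αQ where Q = μI + [[0, Aᵀ],[−A, 0]] with μ > 0 and A ∈ ℝ^{m×n}. Then the spectral radius ρ(Q(α)) = √((μ² + ‖A‖²)α² − 2μα + 1), and ρ(Q(α)) < 1 if and only if 0 < α < 2μ/(μ² + ‖A‖²); moreover the minimal spectral radius over admissible α equals √(1 − μ²/(μ² + ‖A‖²)), attained at α = μ/(μ² + ‖A‖²). -/

import Mathlib

open Matrix

/-- The matrix `Q = μI + [[0, Aᵀ],[−A, 0]]` of the quadratic game. -/
noncomputable def Qgame {n m : ℕ} (μ : ℝ) (A : Matrix (Fin m) (Fin n) ℝ) :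
    Matrix (Fin n ⊕ Fin m) (Fin n ⊕ Fin m) ℝ :=
  μ • (1 : Matrix (Fin n ⊕ Fin m) (Fin n ⊕ Fin m) ℝ) + Matrix.fromBlocks 0 Aᵀ (-A) 0

/-- The spectral (ℓ²-operator) norm of a real matrix. -/
noncomputable def spectralNormMat {n m : ℕ} (A : Matrix (Fin m) (Fin n) ℝ) : ℝ :=
  ‖LinearMap.toContinuousLinearMap (Matrix.toEuclideanLin A)‖

/-- The spectral radius (over ℂ) of a real matrix. -/
noncomputable def rhoMat {n m : ℕ}
    (M : Matrix (Fin n ⊕ Fin m) (Fin n ⊕ Fin m) ℝ) : ENNReal :=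
  spectralRadius ℂ (M.map Complex.ofReal)
/-!
Write `Q = μ I + B` with `B = [[0, Aᵀ], [-A, 0]]`. Then `Q(α) = (1 - αμ) I - α B` with `B`
skew-symmetric, so `Q(α)` is normal and its spectral radius is its operator norm. By the
C*-identity, `‖Q(α)‖² = ‖(1 - αμ)² I + α² BᴴB‖ = (1 - αμ)² + α² ‖B‖²` since `BᴴB ≥ 0`, and
`‖B‖ = ‖A‖`. Everything else is about the quadratic `(μ² + ‖A‖²) α² - 2μα + 1`.
-/

section CStarAlgebra

variable {A : Type*} [CStarAlgebra A]

lemma norm_algebraMap_add_smul_of_nonneg [PartialOrder A] [StarOrderedRing A] [Nontrivial A]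
    {p : A} (hp : 0 ≤ p) {r s : ℝ} (hr : 0 ≤ r) (hs : 0 ≤ s) :
    ‖algebraMap ℝ A r + s • p‖ = r + s * ‖p‖ := by
  set x := algebraMap ℝ A r + s • p
  have hsp : 0 ≤ s • p := smul_nonneg hs hp
  have hr' : 0 ≤ algebraMap ℝ A r := by
    rw [Algebra.algebraMap_eq_smul_one]
    exact smul_nonneg hr zero_le_one
  have hnorm_r : ‖algebraMap ℝ A r‖ = r := by rw [norm_algebraMap', Real.norm_of_nonneg hr]
  refine le_antisymm ?_ ?_
  · calc ‖x‖ ≤ ‖algebraMap ℝ A r‖ + ‖s • p‖ := norm_add_le _ _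
      _ = r + s * ‖p‖ := by rw [hnorm_r, norm_smul, Real.norm_of_nonneg hs]
  · have hrx : r ≤ ‖x‖ :=
      hnorm_r ▸ CStarAlgebra.norm_le_norm_of_nonneg_of_le hr' (le_add_of_nonneg_right hsp)
    have hsp_le : s • p ≤ algebraMap ℝ A (‖x‖ - r) := by
      rw [map_sub]
      exact le_sub_left_of_add_le IsSelfAdjoint.le_algebraMap_norm_self
    have := (CStarAlgebra.norm_le_iff_le_algebraMap _ (sub_nonneg.2 hrx) hsp).2 hsp_le
    rw [norm_smul, Real.norm_of_nonneg hs] at this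
    linarith

lemma star_algebraMap_add_smul_of_mem_skewAdjoint {b : A} (hb : b ∈ skewAdjoint A) (r s : ℝ) :
    star (algebraMap ℝ A r + s • b) = algebraMap ℝ A r - s • b := by
  rw [star_add, star_smul, skewAdjoint.mem_iff.1 hb, ← algebraMap_star_comm, star_trivial,
    star_trivial, smul_neg, sub_eq_add_neg]

lemma spectralRadius_algebraMap_add_smul_of_mem_skewAdjoint [Nontrivial A] {b : A}
    (hb : b ∈ skewAdjoint A) (r s : ℝ) :
    spectralRadius ℂ (algebraMap ℝ A r + s • b) =
      ENNReal.ofReal √(r ^ 2 + s ^ 2 * ‖b‖ ^ 2) := by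
  -- the spectral order, in which `star b * b ≥ 0`
  let _ := CStarAlgebra.spectralOrder A
  have _ := CStarAlgebra.spectralOrderedRing A
  have hbb : star b * b = -(b * b) := by rw [skewAdjoint.mem_iff.1 hb, neg_mul]
  have hcomm : algebraMap ℝ A r * b = b * algebraMap ℝ A r := Algebra.commutes r b
  have hstar_mul : star (algebraMap ℝ A r + s • b) * (algebraMap ℝ A r + s • b) =
      algebraMap ℝ A (r ^ 2) + s ^ 2 • (star b * b) := by
    rw [star_algebraMap_add_smul_of_mem_skewAdjoint hb, hbb, map_pow, sq]
    simp only [sub_mul, mul_add, smul_mul_assoc, mul_smul_comm, hcomm]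
    module
  have : IsStarNormal (algebraMap ℝ A r + s • b) := by
    refine ⟨?_⟩
    change _ * _ = (algebraMap ℝ A r + s • b) * _
    rw [hstar_mul, star_algebraMap_add_smul_of_mem_skewAdjoint hb, hbb, map_pow, sq]
    simp only [add_mul, mul_sub, smul_mul_assoc, mul_smul_comm, hcomm]
    module
  have hnorm_sq : ‖algebraMap ℝ A r + s • b‖ ^ 2 = r ^ 2 + s ^ 2 * ‖b‖ ^ 2 := by
    rw [sq, ← CStarRing.norm_star_mul_self, hstar_mul,
      norm_algebraMap_add_smul_of_nonneg (star_mul_self_nonneg b) (sq_nonneg r) (sq_nonneg s),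
      CStarRing.norm_star_mul_self, sq ‖b‖]
  rw [IsStarNormal.spectralRadius_eq_nnnorm, ← hnorm_sq, Real.sqrt_sq (norm_nonneg _),
    ofReal_norm, enorm_eq_nnnorm]

end CStarAlgebra

open scoped Matrix.Norms.L2Operator

section L2OpNorm

variable {𝕜 : Type*} [RCLike 𝕜] {m n : Type*} [Fintype m] [Fintype n] [DecidableEq n]

lemma Matrix.sum_norm_mulVec_sq_le (A : Matrix m n 𝕜) (x : n → 𝕜) :
    ∑ i, ‖(A *ᵥ x) i‖ ^ 2 ≤ ‖A‖ ^ 2 * ∑ j, ‖x j‖ ^ 2 := by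
  have h := pow_le_pow_left₀ (norm_nonneg _) (A.l2_opNorm_mulVec (WithLp.toLp 2 x)) 2
  rwa [mul_pow, EuclideanSpace.norm_sq_eq, EuclideanSpace.norm_sq_eq] at h

lemma Matrix.l2_opNorm_le_of_sum_norm_mulVec_sq_le {A : Matrix m n 𝕜} {C : ℝ} (hC : 0 ≤ C)
    (h : ∀ x : n → 𝕜, ∑ i, ‖(A *ᵥ x) i‖ ^ 2 ≤ C ^ 2 * ∑ j, ‖x j‖ ^ 2) :
    ‖A‖ ≤ C := by
  rw [l2_opNorm_def]
  refine ContinuousLinearMap.opNorm_le_bound _ hC fun x => ?_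
  refine (sq_le_sq₀ (norm_nonneg _) (by positivity)).mp ?_
  rw [mul_pow, EuclideanSpace.norm_sq_eq, EuclideanSpace.norm_sq_eq]
  exact h x

lemma Matrix.l2_opNorm_fromBlocks_zero_conjTranspose_neg [DecidableEq m] (B : Matrix m n 𝕜) :
    ‖fromBlocks (0 : Matrix n n 𝕜) Bᴴ (-B) (0 : Matrix m m 𝕜)‖ = ‖B‖ := by
  have hmul : ∀ z : n ⊕ m → 𝕜, fromBlocks 0 Bᴴ (-B) 0 *ᵥ z =
      Sum.elim (Bᴴ *ᵥ (z ∘ Sum.inr)) (-(B *ᵥ (z ∘ Sum.inl))) := fun z => by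
    simp [fromBlocks_mulVec, neg_mulVec]
  refine le_antisymm (l2_opNorm_le_of_sum_norm_mulVec_sq_le (norm_nonneg B) fun z => ?_)
    (l2_opNorm_le_of_sum_norm_mulVec_sq_le (norm_nonneg _) fun x => ?_)
  · have hy := Bᴴ.sum_norm_mulVec_sq_le (z ∘ Sum.inr)
    have hx := B.sum_norm_mulVec_sq_le (z ∘ Sum.inl)
    rw [l2_opNorm_conjTranspose] at hy
    simp only [hmul, Fintype.sum_sum_type, Sum.elim_inl, Sum.elim_inr, Pi.neg_apply, norm_neg]
    simp only [Function.comp_apply] at hx hy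
    linarith
  · have h := (fromBlocks 0 Bᴴ (-B) 0).sum_norm_mulVec_sq_le (Sum.elim x 0)
    simpa [hmul, Fintype.sum_sum_type, ← Pi.zero_def] using h

end L2OpNorm

lemma Complex.sq_norm_add_mul_I (x y : ℝ) :
    ‖(x + y * I : ℂ)‖ ^ 2 = ‖x‖ ^ 2 + ‖y‖ ^ 2 := by
  rw [Complex.sq_norm, Complex.normSq_add_mul_I, Real.norm_eq_abs, Real.norm_eq_abs, sq_abs,
    sq_abs]

section Complexification

variable {m n : Type*} [Fintype n]

lemma Matrix.map_ofReal_mulVec_apply (A : Matrix m n ℝ) (z : n → ℂ) (i : m) :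
    (A.map ((↑) : ℝ → ℂ) *ᵥ z) i =
      (A *ᵥ fun j => (z j).re) i + (A *ᵥ fun j => (z j).im) i * Complex.I := by
  apply Complex.ext <;> simp [Matrix.mulVec, dotProduct, Complex.re_sum, Complex.im_sum]

lemma Matrix.l2_opNorm_map_ofReal [Fintype m] [DecidableEq n] (A : Matrix m n ℝ) :
    ‖A.map ((↑) : ℝ → ℂ)‖ = ‖A‖ := by
  refine le_antisymm (l2_opNorm_le_of_sum_norm_mulVec_sq_le (norm_nonneg A) fun z => ?_)
    (l2_opNorm_le_of_sum_norm_mulVec_sq_le (norm_nonneg _) fun x => ?_)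
  · calc ∑ i, ‖(A.map ((↑) : ℝ → ℂ) *ᵥ z) i‖ ^ 2
        = ∑ i, ‖(A *ᵥ fun j => (z j).re) i‖ ^ 2 +
            ∑ i, ‖(A *ᵥ fun j => (z j).im) i‖ ^ 2 := by
          simp only [map_ofReal_mulVec_apply, Complex.sq_norm_add_mul_I, Finset.sum_add_distrib]
      _ ≤ ‖A‖ ^ 2 * ∑ j, ‖(z j).re‖ ^ 2 + ‖A‖ ^ 2 * ∑ j, ‖(z j).im‖ ^ 2 :=
          add_le_add (A.sum_norm_mulVec_sq_le _) (A.sum_norm_mulVec_sq_le _)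
      _ = ‖A‖ ^ 2 * ∑ j, ‖z j‖ ^ 2 := by
          simp only [← mul_add, ← Finset.sum_add_distrib, ← Complex.sq_norm_add_mul_I,
            Complex.re_add_im]
  · have h := (A.map ((↑) : ℝ → ℂ)).sum_norm_mulVec_sq_le fun j => (x j : ℂ)
    simpa [map_ofReal_mulVec_apply, Complex.sq_norm_add_mul_I, ← Pi.zero_def] using h

end Complexification

lemma Matrix.map_ofReal_mem_skewAdjoint {ι : Type*} {M : Matrix ι ι ℝ} (hM : Mᵀ = -M) :
    M.map ((↑) : ℝ → ℂ) ∈ skewAdjoint (Matrix ι ι ℂ) := by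
  rw [skewAdjoint.mem_iff, star_eq_conjTranspose, ← conjTranspose_map _ (fun _ => by simp),
    conjTranspose_eq_transpose_of_trivial, hM, Matrix.map_neg _ Complex.ofReal_neg]

lemma one_sub_smul_Qgame_map_ofReal {n m : ℕ} (μ α : ℝ) (A : Matrix (Fin m) (Fin n) ℝ) :
    (1 - α • Qgame μ A).map ((↑) : ℝ → ℂ) =
      algebraMap ℝ _ (1 - α * μ) +
        (-α) • (fromBlocks 0 Aᵀ (-A) 0).map ((↑) : ℝ → ℂ) := by
  ext i j
  by_cases hij : i = j <;> simp [Algebra.algebraMap_eq_smul_one, Qgame, one_apply, hij]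
  ring

lemma rhoMat_one_sub_smul_Qgame {n m : ℕ} (hnm : 0 < n + m) (μ α : ℝ)
    (A : Matrix (Fin m) (Fin n) ℝ) :
    rhoMat (1 - α • Qgame μ A) =
      ENNReal.ofReal √((1 - α * μ) ^ 2 + α ^ 2 * spectralNormMat A ^ 2) := by
  have : Nonempty (Fin n ⊕ Fin m) := Fintype.card_pos_iff.mp (by simpa using hnm)
  have hskew :
      (fromBlocks 0 Aᵀ (-A) 0)ᵀ = -fromBlocks (0 : Matrix (Fin n) (Fin n) ℝ) Aᵀ (-A) 0 := by
    rw [fromBlocks_transpose, fromBlocks_neg]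
    simp
  have hnorm : ‖(fromBlocks 0 Aᵀ (-A) 0).map ((↑) : ℝ → ℂ)‖ = spectralNormMat A := by
    rw [l2_opNorm_map_ofReal, ← conjTranspose_eq_transpose_of_trivial,
      l2_opNorm_fromBlocks_zero_conjTranspose_neg, l2_opNorm_def]
    rfl
  rw [rhoMat, one_sub_smul_Qgame_map_ofReal, spectralRadius_algebraMap_add_smul_of_mem_skewAdjoint
    (map_ofReal_mem_skewAdjoint hskew), hnorm, neg_sq]

lemma quadratic_vertex_eq {S : ℝ} (hS : S ≠ 0) (μ : ℝ) :
    S * (μ / S) ^ 2 - 2 * μ * (μ / S) + 1 = 1 - μ ^ 2 / S := by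
  field_simp
  ring

lemma quadratic_vertex_le {S : ℝ} (hS : 0 < S) (μ α : ℝ) :
    1 - μ ^ 2 / S ≤ S * α ^ 2 - 2 * μ * α + 1 := by
  have hsquare : S * α ^ 2 - 2 * μ * α + 1 = S * (α - μ / S) ^ 2 + (1 - μ ^ 2 / S) := by
    field_simp
    ring
  rw [hsquare]
  exact le_add_of_nonneg_left (by positivity)

lemma quadratic_lt_one_iff {S μ : ℝ} (hS : 0 < S) (hμ : 0 < μ) (α : ℝ) :
    S * α ^ 2 - 2 * μ * α + 1 < 1 ↔ 0 < α ∧ α < 2 * μ / S := by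
  rw [lt_div_iff₀ hS]
  constructor
  · intro h
    have hα : 0 < α := by nlinarith [sq_nonneg α]
    exact ⟨hα, by nlinarith⟩
  · rintro ⟨hα, hlt⟩
    nlinarith

/-- For the explicit Euler iteration matrix `Q(α) = I − αQ` of the quadratic
game: `ρ(Q(α)) = √((μ² + ‖A‖²)α² − 2μα + 1)`; `ρ(Q(α)) < 1` iff
`0 < α < 2μ/(μ² + ‖A‖²)`; and the minimum over admissible step sizes is
`√(1 − μ²/(μ² + ‖A‖²))`, attained at `α = μ/(μ² + ‖A‖²)`. -/
theorem explicit_euler_spectral_radius {n m : ℕ} (hnm : 0 < n + m)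
    (μ : ℝ) (hμ : 0 < μ) (A : Matrix (Fin m) (Fin n) ℝ) :
    (∀ α : ℝ, rhoMat (1 - α • Qgame μ A) =
        ENNReal.ofReal
          (Real.sqrt ((μ^2 + spectralNormMat A ^ 2) * α^2 - 2*μ*α + 1))) ∧
    (∀ α : ℝ, rhoMat (1 - α • Qgame μ A) < 1 ↔
        0 < α ∧ α < 2*μ / (μ^2 + spectralNormMat A ^ 2)) ∧
    (rhoMat (1 - (μ / (μ^2 + spectralNormMat A ^ 2)) • Qgame μ A) =
        ENNReal.ofReal
          (Real.sqrt (1 - μ^2 / (μ^2 + spectralNormMat A ^ 2)))) ∧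
    (∀ α : ℝ, 0 < α → α < 2*μ / (μ^2 + spectralNormMat A ^ 2) →
        rhoMat (1 - (μ / (μ^2 + spectralNormMat A ^ 2)) • Qgame μ A) ≤
          rhoMat (1 - α • Qgame μ A)) := by
  have hS : 0 < μ ^ 2 + spectralNormMat A ^ 2 := by positivity
  have hρ : ∀ α : ℝ, rhoMat (1 - α • Qgame μ A) =
      ENNReal.ofReal √((μ ^ 2 + spectralNormMat A ^ 2) * α ^ 2 - 2 * μ * α + 1) := by
    intro α
    rw [rhoMat_one_sub_smul_Qgame hnm]
    congr 2
    ring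
  refine ⟨hρ, fun α => ?_, ?_, fun α _ _ => ?_⟩
  · rw [hρ, ENNReal.ofReal_lt_one, Real.sqrt_lt' one_pos, one_pow, quadratic_lt_one_iff hS hμ]
  · rw [hρ, quadratic_vertex_eq hS.ne']
  · rw [hρ, hρ, quadratic_vertex_eq hS.ne']
    gcongr
    exact quadratic_vertex_le hS μ α
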